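/- Let p = (z, t) ∈ ℂ × ℝ satisfy |z|⁴ + t² = 1 and d(p, (1,0)) = 1, where d is the Korányi distance, and set c = |z|². Then the fourth power of the Korányi distance from p to its antipodal point j₁(p) = (conj(z), −t) equals d(p, j₁(p))⁴ = (8c³ − 12c² + 12c + 7) / (2(1 + c)). -/

import Mathlib

/-!
Write `z = x + i y` and `c = x² + y²`. In these coordinates the two hypotheses read
`c² + t² = 1` and `(c - 2x + 1)² + (t + 2y)² = 1`, and `d(p, j₁ p)⁴ = 16 y⁴ + (2t + 4xy)²`.
The difference of the two constraints is linear in `t`; with it and the sphere equation,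
`2 (1 + c) d(p, j₁ p)⁴ - (8c³ - 12c² + 12c + 7)` lies in the ideal they generate, so the distance
depends on `c` alone.
-/

open Complex Real

/-- The Korányi (Heisenberg) distance on ℂ × ℝ. -/
noncomputable def kd (p q : ℂ × ℝ) : ℝ :=
  ((‖p.1 - q.1‖) ^ 4 +
    (p.2 - q.2 + 2 * (p.1 * (starRingEnd ℂ) q.1).im) ^ 2) ^ ((1 : ℝ) / 4)

lemma kd_pow_four (p q : ℂ × ℝ) :
    kd p q ^ 4 = ((p.1.re - q.1.re) ^ 2 + (p.1.im - q.1.im) ^ 2) ^ 2 +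
      (p.2 - q.2 + 2 * (p.1.im * q.1.re - p.1.re * q.1.im)) ^ 2 := by
  have hsq : ‖p.1 - q.1‖ ^ 2 = (p.1.re - q.1.re) ^ 2 + (p.1.im - q.1.im) ^ 2 := by
    rw [Complex.sq_norm, Complex.normSq_apply, sub_re, sub_im]; ring
  have hroot {a : ℝ} (ha : 0 ≤ a) : (a ^ ((1 : ℝ) / 4)) ^ 4 = a := by
    rw [← Real.rpow_natCast, ← Real.rpow_mul ha]; norm_num
  rw [kd, hroot (by positivity),
    show ‖p.1 - q.1‖ ^ 4 = (‖p.1 - q.1‖ ^ 2) ^ 2 by ring, hsq, mul_im, conj_re, conj_im]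
  ring

lemma antipodal_identity_of_sphere_of_dist_one {x y t : ℝ}
    (hsph : (x ^ 2 + y ^ 2) ^ 2 + t ^ 2 = 1)
    (hd : ((x - 1) ^ 2 + y ^ 2) ^ 2 + (t + 2 * y) ^ 2 = 1) :
    16 * y ^ 4 + (2 * t + 4 * x * y) ^ 2 =
      (8 * (x ^ 2 + y ^ 2) ^ 3 - 12 * (x ^ 2 + y ^ 2) ^ 2 + 12 * (x ^ 2 + y ^ 2) + 7) /
        (2 * (1 + (x ^ 2 + y ^ 2))) := by
  rw [eq_div_iff (by positivity)]
  linear_combination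
    (4 * x * (x ^ 2 + y ^ 2 + 1) - 4 * t * y + 6 * (x ^ 2 + y ^ 2) + 1) * (hd - hsph)
    + 8 * (1 + x ^ 2 + 3 * y ^ 2) * hsph

theorem antipodal_distance_formula (z : ℂ) (t : ℝ)
    (hsph : (‖z‖) ^ 4 + t ^ 2 = 1)
    (hd : kd (z, t) ((1 : ℂ), (0 : ℝ)) = 1) :
    (kd (z, t) ((starRingEnd ℂ) z, -t)) ^ 4 =
      (8 * ((‖z‖) ^ 2) ^ 3 - 12 * ((‖z‖) ^ 2) ^ 2
          + 12 * (‖z‖) ^ 2 + 7) /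
        (2 * (1 + (‖z‖) ^ 2)) := by
  have hnorm : ‖z‖ ^ 2 = z.re ^ 2 + z.im ^ 2 := by
    rw [Complex.sq_norm, Complex.normSq_apply]; ring
  have hd4 := congrArg (· ^ 4) hd
  simp only [kd_pow_four, one_re, one_im] at hd4
  rw [kd_pow_four, hnorm]
  simp only [conj_re, conj_im]
  convert antipodal_identity_of_sphere_of_dist_one (x := z.re) (y := z.im) (t := t) ?_ ?_ using 1
  · ring
  · rw [← hnorm, ← pow_mul]; exact hsph
  · linear_combination hd4
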